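/- (Lemma 1 of the paper, existence, uniqueness and identification of the minimum spanning set.) For any μ ∈ ℝ^d: a subset S ⊆ {1,…,d} spans the mean-variance frontier if and only if S ⊇ S*. Consequently S* is nonempty, S* spans the mean-variance frontier, and S* is the unique spanning set that is minimal with respect to inclusion (no proper subset of S* spans, and every spanning set contains S*); i.e., the minimum spanning set MSS exists, is unique, and equals S*. -/

import Mathlib

/-!
Call a fully invested portfolio `x*` of mean `p` a frontier portfolio if its gradient `Σx*` lies in
`span {𝟙, μ}`. Every competitor `x` with the same two constraints then satisfies
`xᵀΣx = x*ᵀΣx* + (x - x*)ᵀΣ(x - x*)`, so `x*` attains `v(p)`. Frontier portfolios are combinations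
of `Σ⁻¹𝟙` and `Σ⁻¹μ`, hence supported in `S*`, and one exists at every attainable mean: so every
`S ⊇ S*` spans. Conversely, if `x` vanishes at `i`, Cauchy–Schwarz bounds the excess
`(x - x*)ᵀΣ(x - x*)` below by `(x*ᵢ)² / (Σ⁻¹)ᵢᵢ`, so `S` cannot span if it misses a coordinate where
some frontier portfolio is nonzero. Every `i ∈ S*` is such a coordinate, because `Σ⁻¹𝟙` and `Σ⁻¹μ`
are combinations of frontier portfolios (at means `0` and `1`, or at the single attainable mean
when `μ` is a multiple of `𝟙`).
-/

open Matrix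

/-- `v_S(p)`: the infimum of portfolio variance over fully invested portfolios
supported on `S` with target mean `p`, valued in `EReal` (so `inf ∅ = +∞`). -/
noncomputable def vS {d : ℕ} (A : Matrix (Fin d) (Fin d) ℝ) (μ : Fin d → ℝ)
    (S : Set (Fin d)) (p : ℝ) : EReal :=
  sInf {q : EReal | ∃ x : Fin d → ℝ,
    ((fun _ => (1 : ℝ)) ⬝ᵥ x = 1) ∧ (μ ⬝ᵥ x = p) ∧
    (∀ i, i ∉ S → x i = 0) ∧ q = ((x ⬝ᵥ (A *ᵥ x) : ℝ) : EReal)}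

/-- `S` spans the mean-variance frontier of the full asset set. -/
def SpansFrontier {d : ℕ} (A : Matrix (Fin d) (Fin d) ℝ) (μ : Fin d → ℝ)
    (S : Set (Fin d)) : Prop :=
  ∀ p : ℝ, vS A μ S p = vS A μ Set.univ p

namespace Matrix

variable {n : Type*} [Fintype n] {A : Matrix n n ℝ}

lemma IsHermitian.dotProduct_mulVec_comm (hA : A.IsHermitian) (x y : n → ℝ) :
    x ⬝ᵥ A *ᵥ y = y ⬝ᵥ A *ᵥ x := by
  have hAt : Aᵀ = A := by rw [← conjTranspose_eq_transpose_of_trivial, hA.eq]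
  simpa only [hAt] using dotProduct_transpose_mulVec A x y

lemma PosSemidef.dotProduct_mulVec_self_nonneg (hA : A.PosSemidef) (x : n → ℝ) :
    0 ≤ x ⬝ᵥ A *ᵥ x := by
  simpa using hA.dotProduct_mulVec_nonneg x

lemma PosDef.dotProduct_mulVec_self_pos (hA : A.PosDef) {x : n → ℝ} (hx : x ≠ 0) :
    0 < x ⬝ᵥ A *ᵥ x := by
  simpa using hA.dotProduct_mulVec_pos hx

lemma IsHermitian.dotProduct_mulVec_smul_sub_smul (hA : A.IsHermitian) (x y : n → ℝ) :
    ((x ⬝ᵥ A *ᵥ x) • y - (x ⬝ᵥ A *ᵥ y) • x) ⬝ᵥ A *ᵥ ((x ⬝ᵥ A *ᵥ x) • y - (x ⬝ᵥ A *ᵥ y) • x) =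
      (x ⬝ᵥ A *ᵥ x) * ((x ⬝ᵥ A *ᵥ x) * (y ⬝ᵥ A *ᵥ y) - (x ⬝ᵥ A *ᵥ y) ^ 2) := by
  simp only [mulVec_sub, mulVec_smul, dotProduct_sub, sub_dotProduct, dotProduct_smul,
    smul_dotProduct, smul_eq_mul, hA.dotProduct_mulVec_comm y x]
  ring

lemma PosDef.sq_dotProduct_mulVec_le (hA : A.PosDef) (x y : n → ℝ) :
    (x ⬝ᵥ A *ᵥ y) ^ 2 ≤ (x ⬝ᵥ A *ᵥ x) * (y ⬝ᵥ A *ᵥ y) := by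
  rcases eq_or_ne x 0 with rfl | hx
  · simp
  have ha := hA.dotProduct_mulVec_self_pos hx
  have h := hA.posSemidef.dotProduct_mulVec_self_nonneg
    ((x ⬝ᵥ A *ᵥ x) • y - (x ⬝ᵥ A *ᵥ y) • x)
  rw [hA.isHermitian.dotProduct_mulVec_smul_sub_smul] at h
  nlinarith

lemma PosDef.sq_dotProduct_mulVec_lt (hA : A.PosDef) {x y : n → ℝ} (hx : x ≠ 0)
    (hxy : ∀ t : ℝ, y ≠ t • x) :
    (x ⬝ᵥ A *ᵥ y) ^ 2 < (x ⬝ᵥ A *ᵥ x) * (y ⬝ᵥ A *ᵥ y) := by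
  have ha := hA.dotProduct_mulVec_self_pos hx
  have hz : (x ⬝ᵥ A *ᵥ x) • y - (x ⬝ᵥ A *ᵥ y) • x ≠ 0 := by
    rw [sub_ne_zero]
    intro h
    apply hxy ((x ⬝ᵥ A *ᵥ x)⁻¹ * (x ⬝ᵥ A *ᵥ y))
    rw [mul_smul, ← h, inv_smul_smul₀ ha.ne']
  have h := hA.dotProduct_mulVec_self_pos hz
  rw [hA.isHermitian.dotProduct_mulVec_smul_sub_smul] at h
  nlinarith

variable [DecidableEq n]

lemma PosDef.mulVec_inv_mulVec (hA : A.PosDef) (v : n → ℝ) : A *ᵥ (A⁻¹ *ᵥ v) = v := by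
  rw [mulVec_mulVec, mul_nonsing_inv _ ((isUnit_iff_isUnit_det A).mp hA.isUnit), one_mulVec]

lemma PosDef.inv_mulVec_mulVec (hA : A.PosDef) (v : n → ℝ) : A⁻¹ *ᵥ (A *ᵥ v) = v := by
  rw [mulVec_mulVec, nonsing_inv_mul _ ((isUnit_iff_isUnit_det A).mp hA.isUnit), one_mulVec]

/-- Cauchy–Schwarz against `A⁻¹ eᵢ`, whose `A`-inner product with `z` is `zᵢ`. -/
lemma PosDef.sq_apply_le_inv_apply_mul (hA : A.PosDef) (z : n → ℝ) (i : n) :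
    z i ^ 2 ≤ A⁻¹ i i * (z ⬝ᵥ A *ᵥ z) := by
  have hv : A *ᵥ (A⁻¹ *ᵥ Pi.single i 1) = Pi.single i 1 := hA.mulVec_inv_mulVec _
  have h := hA.sq_dotProduct_mulVec_le (A⁻¹ *ᵥ Pi.single i 1) z
  rwa [hA.isHermitian.dotProduct_mulVec_comm _ z, hv, dotProduct_single_one,
    dotProduct_single_one, mulVec_single_one] at h

end Matrix

section FrontierPortfolio

variable {n : Type*} [Fintype n] {A : Matrix n n ℝ} {e μ : n → ℝ} {p : ℝ}

/-- The Lagrange condition for minimising `xᵀAx` under `e ⬝ᵥ x = 1` and `μ ⬝ᵥ x = p`. -/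
def IsFrontierPortfolio (A : Matrix n n ℝ) (e μ : n → ℝ) (p : ℝ) (x : n → ℝ) : Prop :=
  e ⬝ᵥ x = 1 ∧ μ ⬝ᵥ x = p ∧ ∃ α β : ℝ, A *ᵥ x = α • e + β • μ

namespace IsFrontierPortfolio

variable {xs x : n → ℝ}

lemma dotProduct_mulVec_eq_add (hA : A.IsHermitian) (hxs : IsFrontierPortfolio A e μ p xs)
    (he : e ⬝ᵥ x = 1) (hμ : μ ⬝ᵥ x = p) :
    x ⬝ᵥ A *ᵥ x = xs ⬝ᵥ A *ᵥ xs + (x - xs) ⬝ᵥ A *ᵥ (x - xs) := by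
  obtain ⟨hes, hμs, α, β, hAxs⟩ := hxs
  have hcross : (x - xs) ⬝ᵥ A *ᵥ xs = 0 := by
    rw [hAxs, dotProduct_add, dotProduct_smul, dotProduct_smul, dotProduct_comm _ e,
      dotProduct_comm _ μ, dotProduct_sub, dotProduct_sub, he, hes, hμ, hμs]
    simp
  have hcross' : xs ⬝ᵥ A *ᵥ (x - xs) = 0 := by
    rw [hA.dotProduct_mulVec_comm, hcross]
  calc x ⬝ᵥ A *ᵥ x = (xs + (x - xs)) ⬝ᵥ A *ᵥ (xs + (x - xs)) := by rw [add_sub_cancel]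
    _ = xs ⬝ᵥ A *ᵥ xs + (x - xs) ⬝ᵥ A *ᵥ (x - xs) := by
      rw [mulVec_add, add_dotProduct, dotProduct_add, dotProduct_add, hcross, hcross']
      ring

end IsFrontierPortfolio

variable [DecidableEq n]

/-- The set `S*` of the paper. -/
def minSpanningSet (A : Matrix n n ℝ) (e μ : n → ℝ) : Set n :=
  {i | (A⁻¹ *ᵥ μ) i ≠ 0 ∨ (A⁻¹ *ᵥ e) i ≠ 0}

lemma IsFrontierPortfolio.apply_eq_zero_of_notMem (hA : A.PosDef) {xs : n → ℝ}
    (hxs : IsFrontierPortfolio A e μ p xs) {i : n}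
    (hi : i ∉ minSpanningSet A e μ) : xs i = 0 := by
  obtain ⟨-, -, α, β, hAxs⟩ := hxs
  have hxs : xs = α • (A⁻¹ *ᵥ e) + β • (A⁻¹ *ᵥ μ) := by
    rw [← hA.inv_mulVec_mulVec xs, hAxs, mulVec_add, mulVec_smul, mulVec_smul]
  simp only [minSpanningSet, Set.mem_ofPred_eq, not_or, not_not] at hi
  simp [hxs, hi.1, hi.2]

lemma isFrontierPortfolio_smul_add_smul (hA : A.PosDef) {α β : ℝ}
    (he : α * (e ⬝ᵥ A⁻¹ *ᵥ e) + β * (e ⬝ᵥ A⁻¹ *ᵥ μ) = 1)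
    (hμ : α * (e ⬝ᵥ A⁻¹ *ᵥ μ) + β * (μ ⬝ᵥ A⁻¹ *ᵥ μ) = p) :
    IsFrontierPortfolio A e μ p (α • (A⁻¹ *ᵥ e) + β • (A⁻¹ *ᵥ μ)) := by
  refine ⟨?_, ?_, α, β, ?_⟩
  · simpa only [dotProduct_add, dotProduct_smul, smul_eq_mul] using he
  · simpa only [dotProduct_add, dotProduct_smul, smul_eq_mul,
      hA.inv.isHermitian.dotProduct_mulVec_comm μ e] using hμ
  · rw [mulVec_add, mulVec_smul, mulVec_smul, hA.mulVec_inv_mulVec, hA.mulVec_inv_mulVec]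

/-- The global minimum-variance portfolio; when `μ = t • e`, `t` is the only attainable mean. -/
lemma isFrontierPortfolio_of_eq_smul (hA : A.PosDef) (he : e ≠ 0) {t : ℝ} (hμ : μ = t • e) :
    IsFrontierPortfolio A e μ t ((e ⬝ᵥ A⁻¹ *ᵥ e)⁻¹ • (A⁻¹ *ᵥ e)) := by
  have ha := hA.inv.dotProduct_mulVec_self_pos he
  simpa using isFrontierPortfolio_smul_add_smul (μ := μ) (p := t) hA (β := 0)
    (by simp [ha.ne']) (by simp [hμ, mulVec_smul]; field_simp)

/-- Merton's closed form; the denominator is the Gram determinant of `e` and `μ` for `A⁻¹`. -/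
noncomputable def frontierPortfolio (A : Matrix n n ℝ) (e μ : n → ℝ) (p : ℝ) : n → ℝ :=
  ((μ ⬝ᵥ A⁻¹ *ᵥ μ - (e ⬝ᵥ A⁻¹ *ᵥ μ) * p) /
      ((e ⬝ᵥ A⁻¹ *ᵥ e) * (μ ⬝ᵥ A⁻¹ *ᵥ μ) - (e ⬝ᵥ A⁻¹ *ᵥ μ) ^ 2)) • (A⁻¹ *ᵥ e) +
    (((e ⬝ᵥ A⁻¹ *ᵥ e) * p - e ⬝ᵥ A⁻¹ *ᵥ μ) /
      ((e ⬝ᵥ A⁻¹ *ᵥ e) * (μ ⬝ᵥ A⁻¹ *ᵥ μ) - (e ⬝ᵥ A⁻¹ *ᵥ μ) ^ 2)) • (A⁻¹ *ᵥ μ)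

lemma gram_det_ne_zero (hA : A.PosDef) (he : e ≠ 0) (hμ : ∀ t : ℝ, μ ≠ t • e) :
    (e ⬝ᵥ A⁻¹ *ᵥ e) * (μ ⬝ᵥ A⁻¹ *ᵥ μ) - (e ⬝ᵥ A⁻¹ *ᵥ μ) ^ 2 ≠ 0 :=
  (sub_pos.2 (hA.inv.sq_dotProduct_mulVec_lt he hμ)).ne'

lemma isFrontierPortfolio_frontierPortfolio (hA : A.PosDef) (he : e ≠ 0)
    (hμ : ∀ t : ℝ, μ ≠ t • e) (p : ℝ) :
    IsFrontierPortfolio A e μ p (frontierPortfolio A e μ p) := by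
  have hD := gram_det_ne_zero hA he hμ
  apply isFrontierPortfolio_smul_add_smul hA
  · rw [div_mul_eq_mul_div, div_mul_eq_mul_div, ← add_div, div_eq_one_iff_eq hD]
    ring
  · rw [div_mul_eq_mul_div, div_mul_eq_mul_div, ← add_div, div_eq_iff hD]
    ring

/-- `A⁻¹e` and `A⁻¹μ` are combinations of the frontier portfolios at means `0` and `1`. -/
lemma notMem_minSpanningSet_of_frontierPortfolio (hA : A.PosDef) (he : e ≠ 0)
    (hμ : ∀ t : ℝ, μ ≠ t • e) {i : n} (h₀ : frontierPortfolio A e μ 0 i = 0)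
    (h₁ : frontierPortfolio A e μ 1 i = 0) :
    i ∉ minSpanningSet A e μ := by
  have hD := gram_det_ne_zero hA he hμ
  simp only [frontierPortfolio, Pi.add_apply, Pi.smul_apply, smul_eq_mul, div_mul_eq_mul_div,
    ← add_div, div_eq_zero_iff, hD, or_false] at h₀ h₁
  simp only [minSpanningSet, Set.mem_ofPred_eq, not_or, not_not]
  constructor
  · apply (mul_eq_zero.1 _).resolve_left hD
    linear_combination (e ⬝ᵥ A⁻¹ *ᵥ μ - μ ⬝ᵥ A⁻¹ *ᵥ μ) * h₀ + (μ ⬝ᵥ A⁻¹ *ᵥ μ) * h₁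
  · apply (mul_eq_zero.1 _).resolve_left hD
    linear_combination (e ⬝ᵥ A⁻¹ *ᵥ e - e ⬝ᵥ A⁻¹ *ᵥ μ) * h₀ + (e ⬝ᵥ A⁻¹ *ᵥ μ) * h₁

lemma minSpanningSet_nonempty (hA : A.PosDef) (he : e ≠ 0) : (minSpanningSet A e μ).Nonempty := by
  have hu : A⁻¹ *ᵥ e ≠ 0 := fun h => he (by rw [← hA.mulVec_inv_mulVec e, h, mulVec_zero])
  obtain ⟨i, hi⟩ := Function.ne_iff.1 hu
  exact ⟨i, Or.inr hi⟩

lemma exists_isFrontierPortfolio (hA : A.PosDef) (he : e ≠ 0) {x : n → ℝ} (hx₁ : e ⬝ᵥ x = 1)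
    (hxp : μ ⬝ᵥ x = p) : ∃ xs, IsFrontierPortfolio A e μ p xs := by
  by_cases hμ : ∃ t : ℝ, μ = t • e
  · obtain ⟨t, rfl⟩ := hμ
    obtain rfl : t = p := by rw [← hxp, smul_dotProduct, hx₁, smul_eq_mul, mul_one]
    exact ⟨_, isFrontierPortfolio_of_eq_smul hA he rfl⟩
  · push Not at hμ
    exact ⟨_, isFrontierPortfolio_frontierPortfolio hA he hμ p⟩

lemma exists_isFrontierPortfolio_apply_ne_zero (hA : A.PosDef) (he : e ≠ 0) {i : n}
    (hi : i ∈ minSpanningSet A e μ) : ∃ p xs, IsFrontierPortfolio A e μ p xs ∧ xs i ≠ 0 := by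
  by_cases hμ : ∃ t : ℝ, μ = t • e
  · obtain ⟨t, rfl⟩ := hμ
    have hu : (A⁻¹ *ᵥ e) i ≠ 0 := by
      rcases hi with hi | hi
      · rw [mulVec_smul, Pi.smul_apply] at hi
        exact right_ne_zero_of_smul hi
      · exact hi
    refine ⟨t, _, isFrontierPortfolio_of_eq_smul hA he rfl, ?_⟩
    simp [hu, (hA.inv.dotProduct_mulVec_self_pos he).ne']
  · push Not at hμ
    by_contra! h
    exact notMem_minSpanningSet_of_frontierPortfolio hA he hμ
      (h 0 _ (isFrontierPortfolio_frontierPortfolio hA he hμ 0))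
      (h 1 _ (isFrontierPortfolio_frontierPortfolio hA he hμ 1)) hi

end FrontierPortfolio

section Spanning

variable {d : ℕ} {A : Matrix (Fin d) (Fin d) ℝ} {μ : Fin d → ℝ} {S : Set (Fin d)} {p : ℝ}
  {xs : Fin d → ℝ}

lemma vS_eq_top (h : ∀ x : Fin d → ℝ, (fun _ => (1 : ℝ)) ⬝ᵥ x = 1 → μ ⬝ᵥ x ≠ p) :
    vS A μ S p = ⊤ := by
  refine sInf_eq_top.2 ?_
  rintro q ⟨x, hx₁, hxp, -, -⟩
  exact absurd hxp (h x hx₁)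

lemma vS_eq_of_isFrontierPortfolio (hA : A.PosSemidef)
    (hxs : IsFrontierPortfolio A (fun _ => 1) μ p xs) (hS : ∀ i ∉ S, xs i = 0) :
    vS A μ S p = (xs ⬝ᵥ A *ᵥ xs : ℝ) := by
  refine le_antisymm (sInf_le ⟨xs, hxs.1, hxs.2.1, hS, rfl⟩) (le_sInf ?_)
  rintro q ⟨x, hx₁, hxp, -, rfl⟩
  rw [hxs.dotProduct_mulVec_eq_add hA.isHermitian hx₁ hxp]
  exact_mod_cast le_add_of_nonneg_right (hA.dotProduct_mulVec_self_nonneg _)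

lemma le_vS_of_isFrontierPortfolio (hA : A.PosDef)
    (hxs : IsFrontierPortfolio A (fun _ => 1) μ p xs) {i : Fin d} (hiS : i ∉ S) :
    ((xs ⬝ᵥ A *ᵥ xs + xs i ^ 2 / A⁻¹ i i : ℝ) : EReal) ≤ vS A μ S p := by
  refine le_sInf ?_
  rintro q ⟨x, hx₁, hxp, hxS, rfl⟩
  have hgap := hA.sq_apply_le_inv_apply_mul (x - xs) i
  rw [Pi.sub_apply, hxS i hiS, zero_sub, neg_sq, ← div_le_iff₀' hA.inv.diag_pos] at hgap
  rw [hxs.dotProduct_mulVec_eq_add hA.isHermitian hx₁ hxp]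
  exact_mod_cast add_le_add_right hgap _

lemma not_spansFrontier_of_isFrontierPortfolio (hA : A.PosDef)
    (hxs : IsFrontierPortfolio A (fun _ => 1) μ p xs) {i : Fin d} (hxi : xs i ≠ 0)
    (hiS : i ∉ S) : ¬ SpansFrontier A μ S := by
  intro hS
  have h := le_vS_of_isFrontierPortfolio hA hxs hiS
  rw [hS p, vS_eq_of_isFrontierPortfolio hA.posSemidef hxs (by simp)] at h
  have hgap : 0 < xs i ^ 2 / A⁻¹ i i := div_pos (by positivity) hA.inv.diag_pos
  have h' : xs ⬝ᵥ A *ᵥ xs + xs i ^ 2 / A⁻¹ i i ≤ xs ⬝ᵥ A *ᵥ xs := by exact_mod_cast h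
  linarith

theorem spansFrontier_iff_subset [NeZero d] (hA : A.PosDef) :
    SpansFrontier A μ S ↔ minSpanningSet A (fun _ => 1) μ ⊆ S := by
  have hone : (fun _ => (1 : ℝ)) ≠ (0 : Fin d → ℝ) := Function.ne_iff.2 ⟨0, one_ne_zero⟩
  refine ⟨fun hS i hi => ?_, fun hsub p => ?_⟩
  · by_contra hiS
    obtain ⟨p, xs, hxs, hxi⟩ := exists_isFrontierPortfolio_apply_ne_zero hA hone hi
    exact not_spansFrontier_of_isFrontierPortfolio hA hxs hxi hiS hS
  by_cases hp : ∃ x : Fin d → ℝ, (fun _ => (1 : ℝ)) ⬝ᵥ x = 1 ∧ μ ⬝ᵥ x = p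
  · obtain ⟨x, hx₁, hxp⟩ := hp
    obtain ⟨xs, hxs⟩ := exists_isFrontierPortfolio hA hone hx₁ hxp
    rw [vS_eq_of_isFrontierPortfolio hA.posSemidef hxs (S := Set.univ) (by simp),
      vS_eq_of_isFrontierPortfolio hA.posSemidef hxs
        fun i hi => IsFrontierPortfolio.apply_eq_zero_of_notMem hA hxs fun h => hi (hsub h)]
  · push Not at hp
    rw [vS_eq_top hp, vS_eq_top hp]

end Spanning

/-- Lemma 1 of the paper: a subset `S` spans the mean-variance
frontier iff `S ⊇ S*`; consequently `S*` is nonempty, spans, no proper subset of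
`S*` spans, and every spanning set contains `S*` — i.e. the minimum spanning set
exists, is unique, and equals `S*`. -/
theorem minimum_spanning_set_exists_unique
    {d : ℕ} (hd : 2 ≤ d) (A : Matrix (Fin d) (Fin d) ℝ) (hA : A.PosDef)
    (μ : Fin d → ℝ)
    (Sstar : Set (Fin d))
    (hSstar : Sstar = {i : Fin d | (A⁻¹ *ᵥ μ) i ≠ 0 ∨ (A⁻¹ *ᵥ fun _ => (1 : ℝ)) i ≠ 0}) :
    (∀ S : Set (Fin d), SpansFrontier A μ S ↔ Sstar ⊆ S) ∧
    Sstar.Nonempty ∧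
    SpansFrontier A μ Sstar ∧
    (∀ S : Set (Fin d), S ⊂ Sstar → ¬ SpansFrontier A μ S) ∧
    (∀ S : Set (Fin d), SpansFrontier A μ S → Sstar ⊆ S) := by
  have : NeZero d := ⟨by omega⟩
  have hiff (S : Set (Fin d)) : SpansFrontier A μ S ↔ Sstar ⊆ S :=
    hSstar ▸ spansFrontier_iff_subset hA
  refine ⟨hiff, hSstar ▸ minSpanningSet_nonempty hA (Function.ne_iff.2 ⟨0, one_ne_zero⟩),
    (hiff _).2 subset_rfl, fun S hS hspan => hS.not_subset ((hiff S).1 hspan),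
    fun S => (hiff S).1⟩
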